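/- Let |A| = k ≥ 2, n = k+1, g' : P(A) → B, g = g' ∘ supp on A^k, and let (g^I)_{I} be a family of functions A^k → B indexed by two-element subsets I of {1,...,n} with g^I(a) = g(a) whenever supp(a) ≠ A; let (ρ_I)_I be permutations of {1,...,k} and φ a bijection of the two-element subsets of {1,...,n}. Then the rule f(b) = g^{φ(I)}(aρ_I) whenever b = aδ_I defines a well-defined function f : A^n → B (the value does not depend on the choice of a and I with b = aδ_I). -/

import Mathlib

/-- `ofo l` lists the distinct elements of `l` in order of first occurrence. -/
def ofo {A : Type*} [DecidableEq A] (l : List A) : List A :=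
  l.reverse.dedup.reverse

/-- The order-of-first-occurrence list of a tuple. -/
def ofoFun {A : Type*} [DecidableEq A] {n : ℕ} (a : Fin n → A) : List A :=
  ofo (List.ofFn a)

/-- `delta i j hij : [n+1] → [n]` is the map δ_I for I = {i,j}, i < j (0-indexed). -/
def delta {n : ℕ} (i j : Fin (n + 1)) (hij : i < j) : Fin (n + 1) → Fin n := fun t =>
  if h : (t : ℕ) < (j : ℕ) then
    ⟨t, lt_of_lt_of_le h (Nat.lt_succ_iff.mp j.isLt)⟩
  else if h2 : (t : ℕ) = (j : ℕ) then
    ⟨i, lt_of_lt_of_le (Fin.lt_def.mp hij) (Nat.lt_succ_iff.mp j.isLt)⟩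
  else ⟨(t : ℕ) - 1, by have := t.isLt; omega⟩

/-- The 2-element subsets of Fin n. -/
def TwoSubset (n : ℕ) := {s : Finset (Fin n) // s.card = 2}

/-!
If `b = a ∘ δ_I` and `a` misses some element of `A`, every candidate value is `g' (supp b)`,
since `supp (a ∘ ρ) = supp a = supp b`. Otherwise `a` is a bijection onto `A` (as `|A| = k`),
so the only pair of equal entries of `b` is `I`, and `a` is then determined by `b` because `δ_I`
is surjective. So the decomposition `b = a ∘ δ_I` is unique and nothing is required of `ρ`, `φ`.
-/

section Delta

variable {n : ℕ} (i j : Fin (n + 1)) (hij : i < j)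

lemma delta_val (t : Fin (n + 1)) :
    ((delta i j hij t : Fin n) : ℕ) =
      if (t : ℕ) < j then (t : ℕ) else if (t : ℕ) = j then (i : ℕ) else (t : ℕ) - 1 := by
  unfold delta
  split_ifs <;> rfl

lemma delta_surjective : Function.Surjective (delta i j hij) := by
  intro m
  by_cases hm : (m : ℕ) < j
  · exact ⟨⟨m, by omega⟩, Fin.ext (by simp [delta_val, hm])⟩
  · refine ⟨⟨m + 1, by omega⟩, Fin.ext ?_⟩
    rw [delta_val]
    dsimp only
    split_ifs <;> omega

lemma delta_apply_left_eq_apply_right : delta i j hij i = delta i j hij j := by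
  have : (i : ℕ) < j := hij
  ext
  simp [delta_val, this]

lemma eq_of_delta_eq_delta {s t : Fin (n + 1)} (hst : s < t)
    (h : delta i j hij s = delta i j hij t) : s = i ∧ t = j := by
  have hs := delta_val i j hij s
  have ht := delta_val i j hij t
  rw [h] at hs
  have : (i : ℕ) < j := hij
  have : (s : ℕ) < t := hst
  rw [Fin.ext_iff, Fin.ext_iff]
  split_ifs at hs ht <;> omega

lemma range_comp_delta {A : Type*} (a : Fin n → A) :
    Set.range (a ∘ delta i j hij) = Set.range a := by
  rw [Set.range_comp, (delta_surjective i j hij).range_eq, Set.image_univ]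

end Delta

lemma eq_of_comp_delta_eq {A : Type*} {n : ℕ} {a a' : Fin n → A} {i j i' j' : Fin (n + 1)}
    {hij : i < j} {hij' : i' < j'} (ha : Function.Injective a)
    (h : a ∘ delta i j hij = a' ∘ delta i' j' hij') : i = i' ∧ j = j' ∧ a = a' := by
  have hcollapse : delta i j hij i' = delta i j hij j' :=
    ha <| (congrFun h i').trans <|
      (congrArg a' (delta_apply_left_eq_apply_right i' j' hij')).trans (congrFun h j').symm
  obtain ⟨rfl, rfl⟩ := eq_of_delta_eq_delta i j hij hij' hcollapse
  exact ⟨rfl, rfl, (delta_surjective _ _ hij).injective_comp_right h⟩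

theorem fGPphi_well_defined_general {A B : Type*} [Fintype A] {k : ℕ}
    (hcard : Fintype.card A = k)
    (g' : Set A → B)
    (gI : TwoSubset (k + 1) → (Fin k → A) → B)
    (hgI : ∀ (s : TwoSubset (k + 1)) (a : Fin k → A),
      Set.range a ≠ Set.univ → gI s a = g' (Set.range a))
    (P : TwoSubset (k + 1) → Equiv.Perm (Fin k))
    (φ : TwoSubset (k + 1) ≃ TwoSubset (k + 1)) :
    ∃ f : (Fin (k + 1) → A) → B,
      ∀ (a : Fin k → A) (i j : Fin (k + 1)) (hij : i < j),
        f (a ∘ delta i j hij) =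
          gI (φ ⟨{i, j}, Finset.card_pair (ne_of_lt hij)⟩)
            (a ∘ (P ⟨{i, j}, Finset.card_pair (ne_of_lt hij)⟩)) := by
  let π : (Fin k → A) × {p : Fin (k + 1) × Fin (k + 1) // p.1 < p.2} → Fin (k + 1) → A :=
    fun x => x.1 ∘ delta _ _ x.2.2
  let val : (Fin k → A) × {p : Fin (k + 1) × Fin (k + 1) // p.1 < p.2} → B := fun x =>
    gI (φ ⟨{x.2.1.1, x.2.1.2}, Finset.card_pair (ne_of_lt x.2.2)⟩)
      (x.1 ∘ P ⟨{x.2.1.1, x.2.1.2}, Finset.card_pair (ne_of_lt x.2.2)⟩)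
  have hval : val.FactorsThrough π := by
    rintro ⟨a, ⟨i, j⟩, hij⟩ ⟨a', ⟨i', j'⟩, hij'⟩ (h : a ∘ delta i j hij = a' ∘ delta i' j' hij')
    by_cases ha : Function.Surjective a
    · have ha_inj : Function.Injective a :=
        ((Fintype.bijective_iff_surjective_and_card a).2 ⟨ha, by simp [hcard]⟩).1
      obtain ⟨rfl, rfl, rfl⟩ := eq_of_comp_delta_eq ha_inj h
      rfl
    · have hrange : Set.range a' = Set.range a := by
        rw [← range_comp_delta i' j' hij' a', ← h, range_comp_delta]
      have ha : Set.range a ≠ Set.univ := mt Set.range_eq_univ.1 ha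
      change gI _ (a ∘ _) = gI _ (a' ∘ _)
      rw [hgI _ _ (by rwa [EquivLike.range_comp]), hgI _ _ (by rwa [EquivLike.range_comp, hrange]),
        EquivLike.range_comp, EquivLike.range_comp, hrange]
  exact ⟨Function.extend π val fun b => g' (Set.range b),
    fun a i j hij => hval.extend_apply _ (a, ⟨(i, j), hij⟩)⟩

/-- the rule f(aδ_I) = g^{φ(I)}(aρ_I) gives a well-defined function
f : A^{k+1} → B, provided each g^I agrees with g = g' ∘ supp on tuples a with
supp(a) ≠ A. -/
theorem fGPphi_well_defined {A B : Type*} [Fintype A] {k : ℕ}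
    (hk : 2 ≤ k) (hcard : Fintype.card A = k)
    (g' : Set A → B)
    (gI : TwoSubset (k + 1) → (Fin k → A) → B)
    (hgI : ∀ (s : TwoSubset (k + 1)) (a : Fin k → A),
      Set.range a ≠ Set.univ → gI s a = g' (Set.range a))
    (P : TwoSubset (k + 1) → Equiv.Perm (Fin k))
    (φ : TwoSubset (k + 1) ≃ TwoSubset (k + 1)) :
    ∃ f : (Fin (k + 1) → A) → B,
      ∀ (a : Fin k → A) (i j : Fin (k + 1)) (hij : i < j),
        f (a ∘ delta i j hij) =
          gI (φ ⟨{i, j}, Finset.card_pair (ne_of_lt hij)⟩)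
            (a ∘ (P ⟨{i, j}, Finset.card_pair (ne_of_lt hij)⟩)) :=
  fGPphi_well_defined_general hcard g' gI hgI P φ
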